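/- For the curve c : [−1,1] → ℝ³ with ċ(s) = (1/√2)(1, s², √(1−s⁴)), the principal normal n(s) = (s/|s|)(0, √(1−s⁴), −s²) and binormal b(s) = (s/|s|)(1/√2)(−1, s², √(1−s⁴)) (defined for 0 < |s| < 1) are discontinuous at s = 0 as S²-valued functions: lim_{s→0⁺} n(s) = (0,1,0) ≠ (0,−1,0) = lim_{s→0⁻} n(s); yet both [n(s)] and [b(s)] extend continuously at s = 0 as ℝP²-valued functions. -/

import Mathlib

/-!
Both fields have the form `(s / |s|) • f s` with `f` continuous and `‖f 0‖ = 1`. The sign factor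
jumps from `-1` to `1` at `s = 0`, which yields the two distinct one-sided limits of `n`; but the
projective distance `dProj y z = arccos |⟪y, z⟫|` does not see the sign, so in `ℝP²` both fields
converge to `[f 0]`.
-/

open Filter

noncomputable abbrev E3 := EuclideanSpace ℝ (Fin 3)

noncomputable def vec3 (a b c : ℝ) : E3 := WithLp.toLp 2 ![a, b, c]

/-- The projective distance between unit vectors:
`d_{ℝP²}([y],[z]) = min{arccos(y•z), arccos(−y•z)}`. -/
noncomputable def dProj (y z : E3) : ℝ :=
  min (Real.arccos (inner ℝ y z : ℝ)) (Real.arccos (-(inner ℝ y z : ℝ)))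

open Topology

lemma dProj_eq_arccos_abs (y z : E3) : dProj y z = Real.arccos |(inner ℝ y z : ℝ)| := by
  rcases le_total 0 (inner ℝ y z : ℝ) with h | h
  · rw [dProj, abs_of_nonneg h, min_eq_left (Real.antitone_arccos (by linarith))]
  · rw [dProj, abs_of_nonpos h, min_eq_right (Real.antitone_arccos (by linarith))]

lemma dProj_smul_left {c : ℝ} (hc : |c| = 1) (y z : E3) : dProj (c • y) z = dProj y z := by
  rw [dProj_eq_arccos_abs, dProj_eq_arccos_abs, real_inner_smul_left, abs_mul, hc, one_mul]

lemma dProj_self {z : E3} (hz : ‖z‖ = 1) : dProj z z = 0 := by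
  rw [dProj_eq_arccos_abs, real_inner_self_eq_norm_sq, hz]
  simp

lemma continuous_dProj_left (z : E3) : Continuous fun y => dProj y z := by
  simp only [dProj_eq_arccos_abs]
  fun_prop

lemma abs_div_abs_self {s : ℝ} (hs : s ≠ 0) : |s / (|s|)| = 1 := by
  rw [abs_div, abs_abs, div_self (abs_ne_zero.mpr hs)]

section SignSmul

variable {E : Type*} [NormedAddCommGroup E] [NormedSpace ℝ E] {f : ℝ → E} {z : E}

lemma tendsto_sign_smul_nhdsGT (hf : Tendsto f (𝓝 0) (𝓝 z)) :
    Tendsto (fun s => (s / |s|) • f s) (𝓝[>] 0) (𝓝 z) := by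
  refine (hf.mono_left nhdsWithin_le_nhds).congr' ?_
  filter_upwards [self_mem_nhdsWithin] with s (hs : 0 < s)
  rw [abs_of_pos hs, div_self hs.ne', one_smul]

lemma tendsto_sign_smul_nhdsLT (hf : Tendsto f (𝓝 0) (𝓝 z)) :
    Tendsto (fun s => (s / |s|) • f s) (𝓝[<] 0) (𝓝 (-z)) := by
  refine (hf.mono_left nhdsWithin_le_nhds).neg.congr' ?_
  filter_upwards [self_mem_nhdsWithin] with s (hs : s < 0)
  rw [abs_of_neg hs, div_neg, div_self hs.ne, neg_one_smul]

end SignSmul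

lemma tendsto_dProj_sign_smul {f : ℝ → E3} {z : E3} (hf : Tendsto f (𝓝 0) (𝓝 z)) (hz : ‖z‖ = 1) :
    Tendsto (fun s => dProj ((s / |s|) • f s) z) (𝓝[≠] 0) (𝓝 0) := by
  have hlim : Tendsto (fun s => dProj (f s) z) (𝓝[≠] 0) (𝓝 0) := by
    simpa [dProj_self hz, Function.comp_def] using
      ((continuous_dProj_left z).tendsto z).comp (hf.mono_left nhdsWithin_le_nhds)
  refine hlim.congr' ?_
  filter_upwards [self_mem_nhdsWithin] with s (hs : s ≠ 0)
  exact (dProj_smul_left (abs_div_abs_self hs) _ _).symm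

lemma norm_vec3 (a b c : ℝ) : ‖vec3 a b c‖ = √(a ^ 2 + b ^ 2 + c ^ 2) := by
  simp [vec3, EuclideanSpace.norm_eq, Fin.sum_univ_three]

@[fun_prop]
lemma Continuous.vec3 {X : Type*} [TopologicalSpace X] {a b c : X → ℝ} (ha : Continuous a)
    (hb : Continuous b) (hc : Continuous c) : Continuous fun x => vec3 (a x) (b x) (c x) := by
  unfold _root_.vec3
  fun_prop

lemma neg_vec3 (a b c : ℝ) : -vec3 a b c = vec3 (-a) (-b) (-c) := by
  ext i; fin_cases i <;> simp [vec3]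

/-- for the curve with `ċ(s) = (1/√2)(1, s², √(1−s⁴))`, the principal normal
`n(s) = (s/|s|)(0, √(1−s⁴), −s²)` and the binormal
`b(s) = (s/|s|)(1/√2)(−1, s², √(1−s⁴))` are discontinuous at `s = 0` as `S²`-valued maps
(`n(0⁺) = (0,1,0) ≠ (0,−1,0) = n(0⁻)`), yet both extend continuously at `s = 0` as
`ℝP²`-valued maps. -/
theorem stmt_15 (nvec bvec : ℝ → E3)
    (hn : ∀ s, nvec s = (s / |s|) • vec3 0 (Real.sqrt (1 - s ^ 4)) (-(s ^ 2)))
    (hb : ∀ s, bvec s = (s / |s|) • ((Real.sqrt 2)⁻¹ • vec3 (-1) (s ^ 2) (Real.sqrt (1 - s ^ 4)))) :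
    Tendsto nvec (nhdsWithin 0 (Set.Ioi 0)) (nhds (vec3 0 1 0)) ∧
    Tendsto nvec (nhdsWithin 0 (Set.Iio 0)) (nhds (vec3 0 (-1) 0)) ∧
    vec3 0 1 0 ≠ vec3 0 (-1) 0 ∧
    Tendsto (fun s => dProj (nvec s) (vec3 0 1 0)) (nhdsWithin 0 {0}ᶜ) (nhds 0) ∧
    Tendsto (fun s => dProj (bvec s) ((Real.sqrt 2)⁻¹ • vec3 (-1) 0 1))
      (nhdsWithin 0 {0}ᶜ) (nhds 0) := by
  obtain rfl : nvec = _ := funext hn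
  obtain rfl : bvec = _ := funext hb
  have hn₀ : Tendsto (fun s : ℝ => vec3 0 √(1 - s ^ 4) (-(s ^ 2))) (𝓝 0) (𝓝 (vec3 0 1 0)) := by
    have : Continuous fun s : ℝ => vec3 0 √(1 - s ^ 4) (-(s ^ 2)) := by fun_prop
    simpa using this.tendsto 0
  have hb₀ : Tendsto (fun s : ℝ => (√2)⁻¹ • vec3 (-1) (s ^ 2) √(1 - s ^ 4)) (𝓝 0)
      (𝓝 ((√2)⁻¹ • vec3 (-1) 0 1)) := by
    have : Continuous fun s : ℝ => (√2)⁻¹ • vec3 (-1) (s ^ 2) √(1 - s ^ 4) := by fun_prop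
    simpa using this.tendsto 0
  refine ⟨tendsto_sign_smul_nhdsGT hn₀, ?_, ?_, tendsto_dProj_sign_smul hn₀ ?_,
    tendsto_dProj_sign_smul hb₀ ?_⟩
  · simpa [neg_vec3] using tendsto_sign_smul_nhdsLT hn₀
  · intro h
    have h1 := congrArg (fun v : E3 => v 1) h
    norm_num [vec3] at h1
  · simp [norm_vec3]
  · rw [norm_smul, norm_vec3, norm_inv, Real.norm_of_nonneg (Real.sqrt_nonneg 2)]
    norm_num
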